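/- Let U ⊆ ℝ³ be open with coordinates (ν₁,ν₂,ν₃) and let V: U → S²(ℝ³) be a C¹ divergence-free symmetric-matrix-valued map. Then for all p, q ∈ {1,2,3}, writing (p,p′,p″) and (q,q′,q″) for the cyclic orderings of (1,2,3) starting at p and at q respectively, one has on U: ∂(adj V)_{p″ q}/∂ν_{p′} − ∂(adj V)_{p′ q}/∂ν_{p″} = ∑_{a=1}^{3} ( (∂V_{q′ p}/∂ν_a) · V_{q″ a} − (∂V_{q″ p}/∂ν_a) · V_{q′ a} ), where adj V denotes the adjugate (classical adjoint) matrix of V. -/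

import Mathlib

/-!
The `(i, j)` entry of the adjugate of a `3 × 3` matrix is the cofactor
`V_{j+1,i+1} V_{j+2,i+2} - V_{j+1,i+2} V_{j+2,i+1}`, so the left-hand side expands by the
product rule into eight terms. Grouping them by the undifferentiated factor, the two groups
multiplying `V_{q′p}` and `V_{q″p}` are, by symmetry of `V`, two thirds of the divergences of the
rows `q″` and `q′`; replacing them by minus the missing third leaves exactly the right-hand side.
-/

/-- The partial derivative of `f : ℝ³ → ℝ` in the `i`-th coordinate direction. -/
noncomputable def pderiv3 (f : (Fin 3 → ℝ) → ℝ) (i : Fin 3) : (Fin 3 → ℝ) → ℝ :=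
  fun x => fderiv ℝ f x (Pi.single i 1)

theorem Fin.sum_univ_three_rotate {M : Type*} [AddCommMonoid M] (f : Fin 3 → M) (p : Fin 3) :
    ∑ i, f i = f p + f (p + 1) + f (p + 2) := by
  rw [← Equiv.sum_comp (Equiv.addLeft p), Fin.sum_univ_three]
  simp

namespace Matrix

variable {R : Type*} [CommRing R]

theorem adjugate_fin_three_apply (A : Matrix (Fin 3) (Fin 3) R) (i j : Fin 3) :
    A.adjugate i j =
      A (j + 1) (i + 1) * A (j + 2) (i + 2) - A (j + 1) (i + 2) * A (j + 2) (i + 1) := by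
  rw [adjugate_fin_three]
  fin_cases i <;> fin_cases j <;> simp <;> ring

/-- Since the adjugate of a `3 × 3` matrix is a quadratic form in the entries, this polarization
is the derivative of `adjugate` at `A` in the direction `B`. -/
def adjugatePolar (A B : Matrix (Fin 3) (Fin 3) R) : Matrix (Fin 3) (Fin 3) R :=
  (A + B).adjugate - A.adjugate - B.adjugate

theorem adjugatePolar_apply (A B : Matrix (Fin 3) (Fin 3) R) (i j : Fin 3) :
    adjugatePolar A B i j =
      B (j + 1) (i + 1) * A (j + 2) (i + 2) + A (j + 1) (i + 1) * B (j + 2) (i + 2) -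
        B (j + 1) (i + 2) * A (j + 2) (i + 1) - A (j + 1) (i + 2) * B (j + 2) (i + 1) := by
  simp only [adjugatePolar, sub_apply, adjugate_fin_three_apply, add_apply]
  ring

theorem adjugatePolar_curl (A : Matrix (Fin 3) (Fin 3) R) (D : Fin 3 → Matrix (Fin 3) (Fin 3) R)
    (hdiv : ∀ j, ∑ i, D i j i = 0) (p q : Fin 3) :
    adjugatePolar A (D (p + 1)) (p + 2) q - adjugatePolar A (D (p + 2)) (p + 1) q =
      ∑ a, (D a (q + 1) p * A (q + 2) a - D a (q + 2) p * A (q + 1) a) := by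
  have h21 : p + 2 + 1 = p := by rw [add_assoc]; exact add_eq_left.mpr rfl
  have h22 : p + 2 + 2 = p + 1 := by rw [add_assoc]; rfl
  have h11 : p + 1 + 1 = p + 2 := by rw [add_assoc]; rfl
  have h12 : p + 1 + 2 = p := by rw [add_assoc]; exact add_eq_left.mpr rfl
  have hdiv₁ := hdiv (q + 1)
  have hdiv₂ := hdiv (q + 2)
  rw [Fin.sum_univ_three_rotate _ p] at hdiv₁ hdiv₂ ⊢
  simp only [adjugatePolar_apply, h21, h22, h11, h12]
  linear_combination A (q + 1) p * hdiv₂ - A (q + 2) p * hdiv₁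

end Matrix

section pderiv3

variable {f g : (Fin 3 → ℝ) → ℝ} {x : Fin 3 → ℝ}

theorem pderiv3_sub (hf : DifferentiableAt ℝ f x) (hg : DifferentiableAt ℝ g x) (i : Fin 3) :
    pderiv3 (fun y => f y - g y) i x = pderiv3 f i x - pderiv3 g i x := by
  simp [pderiv3, fderiv_fun_sub hf hg]

theorem pderiv3_mul (hf : DifferentiableAt ℝ f x) (hg : DifferentiableAt ℝ g x) (i : Fin 3) :
    pderiv3 (fun y => f y * g y) i x = pderiv3 f i x * g x + f x * pderiv3 g i x := by
  simp only [pderiv3, fderiv_fun_mul hf hg, add_apply, smul_apply,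
    smul_eq_mul]
  ring

theorem Filter.EventuallyEq.pderiv3_eq (h : f =ᶠ[nhds x] g) (i : Fin 3) :
    pderiv3 f i x = pderiv3 g i x := by
  simp only [pderiv3, h.fderiv_eq]

theorem pderiv3_adjugate_apply {V : (Fin 3 → ℝ) → Matrix (Fin 3) (Fin 3) ℝ}
    (hV : ∀ a b, DifferentiableAt ℝ (fun y => V y a b) x) (i j k : Fin 3) :
    pderiv3 (fun y => (V y).adjugate i j) k x =
      Matrix.adjugatePolar (V x) (Matrix.of fun a b => pderiv3 (fun y => V y a b) k x) i j := by
  simp only [Matrix.adjugate_fin_three_apply, Matrix.adjugatePolar_apply, Matrix.of_apply]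
  rw [pderiv3_sub ((hV _ _).fun_mul (hV _ _)) ((hV _ _).fun_mul (hV _ _)),
    pderiv3_mul (hV _ _) (hV _ _), pderiv3_mul (hV _ _) (hV _ _)]
  ring

end pderiv3

theorem adjugate_curl_eq
    (U : Set (Fin 3 → ℝ)) (hU : IsOpen U)
    (V : (Fin 3 → ℝ) → Matrix (Fin 3) (Fin 3) ℝ)
    (hV : ∀ a b : Fin 3, ContDiffOn ℝ 1 (fun y => V y a b) U)
    (hsymm : ∀ x ∈ U, (V x).IsSymm)
    (hdiv : ∀ x ∈ U, ∀ j : Fin 3, ∑ i : Fin 3, pderiv3 (fun y => V y i j) i x = 0) :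
    ∀ x ∈ U, ∀ p q : Fin 3,
      pderiv3 (fun y => (V y).adjugate (p + 2) q) (p + 1) x -
        pderiv3 (fun y => (V y).adjugate (p + 1) q) (p + 2) x =
      ∑ a : Fin 3,
        (pderiv3 (fun y => V y (q + 1) p) a x * V x (q + 2) a -
          pderiv3 (fun y => V y (q + 2) p) a x * V x (q + 1) a) := by
  intro x hx p q
  have hU_nhds : U ∈ nhds x := hU.mem_nhds hx
  have hV_diff : ∀ a b, DifferentiableAt ℝ (fun y => V y a b) x := fun a b =>
    ((hV a b).differentiableOn one_ne_zero).differentiableAt hU_nhds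
  have hD_symm : ∀ k a b, pderiv3 (fun y => V y a b) k x = pderiv3 (fun y => V y b a) k x :=
    fun k a b => Filter.EventuallyEq.pderiv3_eq
      (Filter.eventually_of_mem hU_nhds fun y hy => ((hsymm y hy).apply a b).symm) k
  have hdiv_row : ∀ j, ∑ i, pderiv3 (fun y => V y j i) i x = 0 := by
    simpa only [hD_symm _ _ _] using hdiv x hx
  rw [pderiv3_adjugate_apply hV_diff, pderiv3_adjugate_apply hV_diff]
  exact Matrix.adjugatePolar_curl (V x)
    (fun k => Matrix.of fun a b => pderiv3 (fun y => V y a b) k x) hdiv_row p q
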